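/- Let B be a noncompact smooth manifold (second-countable, Hausdorff, without boundary) and let 𝒩 be a nonzero real normed vector space. Then there exists an open set U ⊆ B × 𝒩 containing B × {0} such that there is no neighborhood W of 0 in 𝒩 with B × W ⊆ U. In particular, B × {0} admits a neighborhood in B × 𝒩 containing no product neighborhood B × W. -/

import Mathlib

open Manifold

/-- If `B` is a noncompact smooth manifold (second countable, Hausdorff, without boundary) and
`𝒩` is a nonzero real normed vector space, then `B × {0}` admits an open neighborhood `U` in
`B × 𝒩` that contains no product neighborhood `B × W` of `B × {0}`. -/
theorem exists_open_nhd_of_zero_section_without_product_nhd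
    {E : Type*} [NormedAddCommGroup E] [NormedSpace ℝ E]
    {H : Type*} [TopologicalSpace H] (I : ModelWithCorners ℝ E H) [I.Boundaryless]
    {B : Type*} [TopologicalSpace B] [ChartedSpace H B] [IsManifold I (⊤ : ℕ∞) B]
    [SecondCountableTopology B] [T2Space B] [NoncompactSpace B]
    {N : Type*} [NormedAddCommGroup N] [NormedSpace ℝ N] [Nontrivial N] :
    ∃ U : Set (B × N), IsOpen U ∧ (∀ b : B, (b, (0 : N)) ∈ U) ∧
      ∀ W ∈ nhds (0 : N), ¬ (Set.univ ×ˢ W ⊆ U) := by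
  classical
  -- A countable open cover of `B` with no finite subcover.
  have hnc : ¬ IsCompact (Set.univ : Set B) := NoncompactSpace.noncompact_univ
  rw [isCompact_iff_finite_subcover] at hnc
  push_neg at hnc
  obtain ⟨ι, U, hUo, hUcov, hUfin⟩ := hnc
  -- use Lindelöf to extract a countable subcover
  obtain ⟨t, htc, htcov⟩ :=
    (isLindelof_iff_countable_subcover.mp (isLindelof_univ_iff.mpr inferInstance)) U hUo hUcov
  have hBne : Nonempty B := by
    by_contra h
    rw [not_nonempty_iff] at h
    exact NoncompactSpace.noncompact_univ (X := B) (by simp [Set.univ_eq_empty_iff.mpr h])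
  have htne : t.Nonempty := by
    rcases hBne with ⟨b⟩
    rcases Set.mem_iUnion₂.mp (htcov (Set.mem_univ b)) with ⟨i, hi, _⟩
    exact ⟨i, hi⟩
  obtain ⟨f, hf⟩ := htc.exists_eq_range htne
  -- the countable cover
  set V : ℕ → Set B := fun n => U (f n) with hV
  have hVo : ∀ n, IsOpen (V n) := fun n => hUo _
  have hVcov : ∀ b : B, ∃ n, b ∈ V n := by
    intro b
    rcases Set.mem_iUnion₂.mp (htcov (Set.mem_univ b)) with ⟨i, hi, hbi⟩
    rw [hf] at hi
    rcases hi with ⟨n, rfl⟩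
    exact ⟨n, hbi⟩
  -- no initial segment covers
  have hVfin : ∀ n : ℕ, ¬ (Set.univ : Set B) ⊆ ⋃ m ∈ Finset.range n, V m := by
    intro n hsub
    refine hUfin ((Finset.range n).image f) ?_
    intro b hb
    rcases Set.mem_iUnion₂.mp (hsub hb) with ⟨m, hm, hbm⟩
    exact Set.mem_iUnion₂.mpr ⟨f m, Finset.mem_image_of_mem f hm, hbm⟩
  -- the open set
  refine ⟨⋃ n, V n ×ˢ Metric.ball (0 : N) (1 / (n + 1)), ?_, ?_, ?_⟩
  · exact isOpen_iUnion fun n => (hVo n).prod Metric.isOpen_ball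
  · intro b
    rcases hVcov b with ⟨n, hn⟩
    exact Set.mem_iUnion.mpr ⟨n, hn, by
      simp [Metric.mem_ball]
      positivity⟩
  · intro W hW hsub
    rcases Metric.mem_nhds_iff.mp hW with ⟨r, hr, hball⟩
    obtain ⟨n, hn⟩ := exists_nat_one_div_lt hr
    -- pick a vector of norm exactly 1/(n+1)
    obtain ⟨u, hu⟩ := exists_ne (0 : N)
    have hun : ‖u‖ ≠ 0 := norm_ne_zero_iff.mpr hu
    set v : N := ((1 / (n + 1 : ℝ)) / ‖u‖) • u with hv
    have hnpos : (0 : ℝ) < 1 / (n + 1 : ℝ) := by positivity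
    have hvnorm : ‖v‖ = 1 / (n + 1 : ℝ) := by
      rw [hv, norm_smul, Real.norm_eq_abs, abs_of_pos (by positivity), div_mul_cancel₀ _ hun]
    have hvW : v ∈ W := hball (by simpa [Metric.mem_ball, hvnorm] using hn)
    refine hVfin n (fun b _ => ?_)
    have hbU : (b, v) ∈ ⋃ n, V n ×ˢ Metric.ball (0 : N) (1 / (n + 1)) :=
      hsub (Set.mem_prod.mpr ⟨Set.mem_univ b, hvW⟩)
    rcases Set.mem_iUnion.mp hbU with ⟨m, hbm, hvm⟩
    have hvm' : (1 : ℝ) / (n + 1) < 1 / (m + 1) := by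
      simpa [Metric.mem_ball, hvnorm] using hvm
    have hmn : m < n := by
      by_contra h
      push_neg at h
      have : (1 : ℝ) / (m + 1) ≤ 1 / (n + 1) := by
        apply one_div_le_one_div_of_le (by positivity)
        exact_mod_cast by omega
      linarith
    exact Set.mem_iUnion₂.mpr ⟨m, Finset.mem_range.mpr hmn, hbm⟩
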